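/- arXiv:2106.01018 — 2 statements merged into one kernel-verified Lean document; each statement's English description precedes it below -/
import Mathlib

section
/- Let n ∈ ℕ₀, η > 0, and let F₀, …, F_n : ℂ → ℂ be entire functions. Define the polyanalytic function F(z) = Σ_{k=0}^{n} F_k(z)·(conj z)^k. If F(z) = 0 for every z ∈ ℂ with |z| = ηk for some positive integer k, then F is identically zero on ℂ (equivalently, all F_k are identically zero). -/
noncomputable section
open Complex
open scoped Real ComplexConjugate
open Filter Metric Set Topology

/-! On the circle `‖z‖ = r` one has `conj z = r² / z`, so `z ^ n F(z)` agrees there with the entire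
function `∑ₖ r^{2k} F_k(z) z^{n-k}`, which therefore vanishes identically. Doing this for the
`n + 1` distinct radii `η, 2η, …, (n+1)η` gives an invertible Vandermonde system in the unknowns
`F_k(z) z^{n-k}`, so each `F_k` vanishes off `0`, hence everywhere by continuity. -/

theorem Complex.sphere_nontrivial (c : ℂ) {r : ℝ} (hr : 0 < r) : (sphere c r).Nontrivial :=
  ⟨c + r, by simp [hr.le], c - r, by simp [hr.le], by
    rw [Ne, ← sub_eq_zero]; ring_nf; simp [hr.ne']⟩

theorem Differentiable.eq_zero_of_eqOn_sphere {E : Type*} [NormedAddCommGroup E]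
    [NormedSpace ℂ E] [CompleteSpace E] {f : ℂ → E} (hf : Differentiable ℂ f) {c : ℂ} {r : ℝ}
    (hr : 0 < r) (h : EqOn f 0 (sphere c r)) : f = 0 := by
  obtain ⟨z₀, hz₀⟩ := (Complex.sphere_nontrivial c hr).nonempty
  have hacc : AccPt z₀ (𝓟 (sphere c r)) :=
    (isPreconnected_sphere (by simp) c r).preperfect_of_nontrivial
      (Complex.sphere_nontrivial c hr) z₀ hz₀
  have hfreq : ∃ᶠ z in 𝓝[≠] z₀, f z = 0 :=
    (accPt_iff_frequently_nhdsNE.mp hacc).mono fun z hz => h hz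
  funext z
  exact (analyticOnNhd_univ_iff_differentiable.mpr hf)
    |>.eqOn_zero_of_preconnected_of_frequently_eq_zero isPreconnected_univ (mem_univ z₀) hfreq
    (mem_univ z)

section Polyanalytic

variable {n : ℕ} {F : Fin (n + 1) → ℂ → ℂ}

theorem pow_mul_sum_conj_pow_of_norm_eq {r : ℝ} {z : ℂ} (hz : ‖z‖ = r) :
    z ^ n * ∑ k : Fin (n + 1), F k z * conj z ^ (k : ℕ) =
      ∑ k : Fin (n + 1), ((r : ℂ) ^ 2) ^ (k : ℕ) * (F k z * z ^ (n - k : ℕ)) := by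
  have hzz : z * conj z = (r : ℂ) ^ 2 := by
    rw [mul_conj, normSq_eq_norm_sq, hz]; push_cast; rfl
  rw [Finset.mul_sum]
  refine Finset.sum_congr rfl fun k _ => ?_
  rw [← pow_mul_pow_sub z (Nat.lt_succ_iff.mp k.2), ← hzz, mul_pow]
  ring

theorem sum_sq_pow_mul_eq_zero_of_vanishing_on_circle (hF : ∀ k, Differentiable ℂ (F k))
    {r : ℝ} (hr : 0 < r)
    (h : ∀ z : ℂ, ‖z‖ = r → ∑ k : Fin (n + 1), F k z * conj z ^ (k : ℕ) = 0) (z : ℂ) :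
    ∑ k : Fin (n + 1), ((r : ℂ) ^ 2) ^ (k : ℕ) * (F k z * z ^ (n - k : ℕ)) = 0 := by
  have hdiff : Differentiable ℂ fun z =>
      ∑ k : Fin (n + 1), ((r : ℂ) ^ 2) ^ (k : ℕ) * (F k z * z ^ (n - k : ℕ)) := by
    fun_prop
  refine congrFun (hdiff.eq_zero_of_eqOn_sphere (c := 0) hr fun w hw => ?_) z
  rw [mem_sphere_zero_iff_norm] at hw
  simp only [Pi.zero_apply]
  rw [← pow_mul_sum_conj_pow_of_norm_eq hw, h w hw, mul_zero]

theorem coeff_eq_zero_of_vanishing_on_circles (hF : ∀ k, Differentiable ℂ (F k))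
    {r : Fin (n + 1) → ℝ} (hr : ∀ j, 0 < r j) (hr_inj : Function.Injective r)
    (h : ∀ j, ∀ z : ℂ, ‖z‖ = r j → ∑ k : Fin (n + 1), F k z * conj z ^ (k : ℕ) = 0)
    (k : Fin (n + 1)) : F k = 0 := by
  have hsq_inj : Function.Injective fun j => (r j : ℂ) ^ 2 := by
    intro i j hij
    simp only at hij
    exact hr_inj <| (sq_eq_sq₀ (hr i).le (hr j).le).mp (by exact_mod_cast hij)
  have hmul : ∀ z, F k z * z ^ (n - k : ℕ) = 0 := fun z =>
    congrFun (Matrix.eq_zero_of_forall_index_sum_pow_mul_eq_zero hsq_inj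
      fun j => sum_sq_pow_mul_eq_zero_of_vanishing_on_circle hF (hr j) (h j) z) k
  refine (hF k).continuous.ext_on (dense_compl_singleton 0) continuous_const fun z hz => ?_
  exact (mul_eq_zero.mp (hmul z)).resolve_right (pow_ne_zero _ hz)

end Polyanalytic

/-- If a polyanalytic function `F(z) = Σ_{k=0}^n F_k(z) (conj z)^k` with
entire coefficient functions `F_k` vanishes on every circle `|z| = ηk`, `k ∈ ℕ`, `k ≥ 1`,
then it vanishes identically. -/
theorem polyanalytic_vanishing_on_circles
    (n : ℕ) (η : ℝ) (hη : 0 < η) (F : Fin (n + 1) → ℂ → ℂ)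
    (hF : ∀ k, Differentiable ℂ (F k))
    (hzero : ∀ z : ℂ, (∃ k : ℕ, 0 < k ∧ ‖z‖ = η * k) →
      ∑ k : Fin (n + 1), F k z * (conj z) ^ (k : ℕ) = 0) :
    ∀ z : ℂ, ∑ k : Fin (n + 1), F k z * (conj z) ^ (k : ℕ) = 0 := by
  have hradii : StrictMono fun j : Fin (n + 1) => η * ((j : ℕ) + 1 : ℕ) := fun i j hij =>
    mul_lt_mul_of_pos_left (by exact_mod_cast Nat.succ_lt_succ hij) hη
  have hF_zero := coeff_eq_zero_of_vanishing_on_circles hF (fun j => by positivity)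
    hradii.injective fun j z hz => hzero z ⟨j + 1, Nat.succ_pos _, hz⟩
  intro z
  simp [hF_zero]
end
end

section
/- Let s ≥ 0. Let f ∈ A_{ϑ_s}(ℝ), i.e. f is a continuous function on ℝ vanishing at infinity whose Fourier transform satisfies ‖f‖_{A_{ϑ_s}} := ∫_ℝ |f̂(ξ)|·(1+|ξ|)^s dξ < ∞, and let g ∈ M¹_{ϑ_s}(ℝ), i.e. g ∈ L²(ℝ) with ‖g‖_{M¹_{ϑ_s}} := ∫_{ℝ²} |V_{h₀}g(z)|·(1+|z|)^s dz < ∞. Then the pointwise product f·g belongs to M¹_{ϑ_s}(ℝ) and ‖f·g‖_{M¹_{ϑ_s}} ≤ ‖f‖_{A_{ϑ_s}}·‖g‖_{M¹_{ϑ_s}}. -/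
/-!
Fourier inversion writes `f` as a superposition `f = ∫ f̂(η) M_η dη` of modulations, and
modulating `g` by `η` translates its short-time Fourier transform by `η` in frequency. Hence
`|V(fg)|` is dominated by the convolution in the frequency variable of `|f̂|` with `|Vg|`, and the
submultiplicativity `ϑ_s(z) ≤ ϑ_s(η) ϑ_s(z - iη)` of the weight together with Tonelli and
translation invariance of Lebesgue measure on `ℂ ≅ ℝ²` yields the weighted Young-type bound.
-/

noncomputable section
open MeasureTheory Complex Filter Set Metric
open scoped Real ENNReal NNReal ComplexConjugate Topology

/-- The short-time Fourier transform of `f ∈ L²(ℝ)` with window `g ∈ L²(ℝ)`: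
`V_g f (x, ξ) = ∫ f(t) conj(g(t-x)) e^{-2πiξt} dt`. -/
def stftL2 (g f : ℝ → ℂ) (x ξ : ℝ) : ℂ :=
  ∫ t : ℝ, f t * conj (g (t - x)) * Complex.exp (-(2 * π * ξ * t) * Complex.I)

/-- The squared `L²(ℝ)`-norm as a lower integral. -/
def l2NormSq (f : ℝ → ℂ) : ℝ≥0∞ := ∫⁻ t : ℝ, (‖f t‖₊ : ℝ≥0∞) ^ 2

open MeasureTheory

/-- The weighted `M¹_{ϑ_s}` norm of `g ∈ L²(ℝ)`, computed with respect to the Gaussian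
window `h₀`: `∫_{ℝ²} |V_{h₀} g (z)| (1+|z|)^s dz`. -/
def m1WeightedNorm (h₀ g : ℝ → ℂ) (s : ℝ) : ℝ≥0∞ :=
  ∫⁻ z : ℂ, (‖stftL2 h₀ g z.re z.im‖₊ : ℝ≥0∞) * ENNReal.ofReal ((1 + ‖z‖) ^ s)

lemma one_add_norm_add_rpow_le {E : Type*} [SeminormedAddGroup E] {s : ℝ} (hs : 0 ≤ s)
    (a b : E) : (1 + ‖a + b‖) ^ s ≤ (1 + ‖a‖) ^ s * (1 + ‖b‖) ^ s := by
  have hab : 1 + ‖a + b‖ ≤ (1 + ‖a‖) * (1 + ‖b‖) := by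
    nlinarith [norm_add_le a b, norm_nonneg a, norm_nonneg b]
  rw [← Real.mul_rpow (by positivity) (by positivity)]
  exact Real.rpow_le_rpow (by positivity) hab hs

lemma lintegral_lintegral_mul_comp_sub {E X : Type*} [MeasurableSpace E] [AddGroup E]
    [MeasurableAdd E] [MeasurableSub₂ E] [MeasurableSpace X] {μ : Measure E} {ν : Measure X}
    [μ.IsAddRightInvariant] [SFinite μ] [SFinite ν] {c : X → ℝ≥0∞} (hc : AEMeasurable c ν)
    {G : E → ℝ≥0∞} (hG : Measurable G) {φ : X → E} (hφ : Measurable φ) :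
    ∫⁻ z, ∫⁻ y, c y * G (z - φ y) ∂ν ∂μ = (∫⁻ y, c y ∂ν) * ∫⁻ z, G z ∂μ := by
  have hGφ : Measurable fun p : E × X => G (p.1 - φ p.2) :=
    hG.comp (measurable_fst.sub (hφ.comp measurable_snd))
  rw [lintegral_lintegral_swap (hc.comp_snd.mul hGφ.aemeasurable), ← lintegral_mul_const'' _ hc]
  refine lintegral_congr fun y => ?_
  rw [lintegral_const_mul (c y) (f := fun z => G (z - φ y)) (hG.comp (measurable_sub_const _)),
    lintegral_sub_right_eq_self]

lemma memLp_two_ofReal_mul_exp_neg_mul_sq {b : ℝ} (hb : 0 < b) (c : ℝ) :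
    MemLp (fun t : ℝ => ((c * Real.exp (-(b * t ^ 2)) : ℝ) : ℂ)) 2 volume := by
  rw [memLp_two_iff_integrable_sq_norm (by fun_prop)]
  refine ((integrable_exp_neg_mul_sq (by positivity : 0 < 2 * b)).const_mul (c ^ 2)).congr
    (Filter.Eventually.of_forall fun t => ?_)
  simp only [Complex.norm_real, Real.norm_eq_abs, sq_abs, mul_pow, ← Real.exp_nat_mul]
  ring_nf

section STFT

variable {h g : ℝ → ℂ}

lemma stftL2_congr_ae {g' : ℝ → ℂ} (hgg' : g =ᵐ[volume] g') : stftL2 h g = stftL2 h g' := by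
  ext x ξ
  refine integral_congr_ae ?_
  filter_upwards [hgg'] with t ht
  rw [ht]

lemma measurable_uncurry_stftL2 (hh : Measurable h) (hg : AEStronglyMeasurable g volume) :
    Measurable (Function.uncurry (stftL2 h g)) := by
  rw [stftL2_congr_ae hg.ae_eq_mk]
  have hintegrand : StronglyMeasurable fun p : (ℝ × ℝ) × ℝ =>
      hg.mk g p.2 * conj (h (p.2 - p.1.1)) * cexp (-(2 * π * p.1.2 * p.2) * I) := by
    refine ((hg.stronglyMeasurable_mk.comp_measurable measurable_snd).mul ?_).mul ?_
    · exact (continuous_conj.measurable.comp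
        (hh.comp (measurable_snd.sub (measurable_fst.comp measurable_fst)))).stronglyMeasurable
    · exact (Continuous.measurable (by fun_prop)).stronglyMeasurable
  exact hintegrand.integral_prod_right'.measurable

lemma integrable_mul_conj_comp_sub (hg : MemLp g 2 volume) (hh : MemLp h 2 volume) (x : ℝ) :
    Integrable (fun t => g t * conj (h (t - x))) volume := by
  have hshift : MemLp (fun t => conj (h (t - x))) 2 volume :=
    (hh.comp_measurePreserving (measurePreserving_sub_right volume x)).star
  exact hg.integrable_mul hshift

lemma stftL2_fourierInv_mul {F : ℝ → ℂ} (hF : Integrable F volume) (x ξ : ℝ)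
    (hK : Integrable (fun t => g t * conj (h (t - x))) volume) :
    stftL2 h (fun t => (∫ η : ℝ, F η * cexp ((2 * π * t * η) * I)) * g t) x ξ
      = ∫ η : ℝ, F η * stftL2 h g x (ξ - η) := by
  set K : ℝ → ℂ := fun t => g t * conj (h (t - x))
  have hphase : ∀ t η : ℝ, cexp ((2 * π * t * η) * I) * cexp (-(2 * π * ξ * t) * I)
      = cexp (-(2 * π * ((ξ - η : ℝ) : ℂ) * t) * I) := by
    intro t η; rw [← Complex.exp_add]; push_cast; ring_nf
  have hexpand : ∀ t : ℝ, (∫ η : ℝ, F η * cexp ((2 * π * t * η) * I)) * g t *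
        conj (h (t - x)) * cexp (-(2 * π * ξ * t) * I)
      = ∫ η : ℝ, F η * (K t * cexp (-(2 * π * ((ξ - η : ℝ) : ℂ) * t) * I)) := by
    intro t
    simp only [← integral_mul_const, ← hphase, K]
    congr 1; ext η; ring
  have hswap : Integrable (Function.uncurry fun t η : ℝ =>
      F η * (K t * cexp (-(2 * π * ((ξ - η : ℝ) : ℂ) * t) * I))) (volume.prod volume) := by
    refine ((hK.mul_prod hF).mul_bdd (c := 1)
      (g := fun p : ℝ × ℝ => cexp (-(2 * π * ((ξ - p.2 : ℝ) : ℂ) * p.1) * I))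
      (Continuous.aestronglyMeasurable (by fun_prop))
      (Filter.Eventually.of_forall fun p => ?_)).congr (Filter.Eventually.of_forall fun p => ?_)
    · rw [show -(2 * π * ((ξ - p.2 : ℝ) : ℂ) * p.1) * I = ((-(2 * π * (ξ - p.2) * p.1) : ℝ) : ℂ) * I
        by push_cast; ring, Complex.norm_exp_ofReal_mul_I]
    · simp only [Function.uncurry]; ring
  simp only [stftL2]
  rw [integral_congr_ae (Filter.Eventually.of_forall hexpand), integral_integral_swap hswap]
  simp only [integral_const_mul, K, mul_assoc]

lemma enorm_stftL2_fourierInv_mul_mul_weight_le {s : ℝ} (hs : 0 ≤ s) {F : ℝ → ℂ}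
    (hF : Integrable F volume) (hh : MemLp h 2 volume) (hg : MemLp g 2 volume) (z : ℂ) :
    ‖stftL2 h (fun t => (∫ η : ℝ, F η * cexp ((2 * π * t * η) * I)) * g t) z.re z.im‖ₑ *
        ENNReal.ofReal ((1 + ‖z‖) ^ s)
      ≤ ∫⁻ η : ℝ, (‖F η‖ₑ * ENNReal.ofReal ((1 + |η|) ^ s)) *
          (‖stftL2 h g (z - I * η).re (z - I * η).im‖ₑ *
            ENNReal.ofReal ((1 + ‖z - I * η‖) ^ s)) := by
  rw [stftL2_fourierInv_mul hF z.re z.im (integrable_mul_conj_comp_sub hg hh z.re)]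
  grw [enorm_integral_le_lintegral_enorm, ← lintegral_mul_const' _ _ ENNReal.ofReal_ne_top]
  refine lintegral_mono fun η => ?_
  have hweight : ENNReal.ofReal ((1 + ‖z‖) ^ s)
      ≤ ENNReal.ofReal ((1 + |η|) ^ s) * ENNReal.ofReal ((1 + ‖z - I * η‖) ^ s) := by
    rw [← ENNReal.ofReal_mul (by positivity)]
    refine ENNReal.ofReal_le_ofReal ?_
    simpa using one_add_norm_add_rpow_le hs (I * η) (z - I * η)
  simp only [enorm_mul, sub_re, sub_im, I_mul_re, I_mul_im, ofReal_re, ofReal_im, neg_zero,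
    sub_zero]
  grw [hweight]
  exact le_of_eq (by ring)

lemma m1WeightedNorm_fourierInv_mul_le {s : ℝ} (hs : 0 ≤ s) {F : ℝ → ℂ}
    (hF : Integrable F volume) (hhm : Measurable h) (hh : MemLp h 2 volume)
    (hg : MemLp g 2 volume) :
    m1WeightedNorm h (fun t => (∫ η : ℝ, F η * cexp ((2 * π * t * η) * I)) * g t) s
      ≤ (∫⁻ η : ℝ, ‖F η‖ₑ * ENNReal.ofReal ((1 + |η|) ^ s)) * m1WeightedNorm h g s := by
  have hG : Measurable fun z : ℂ =>
      ‖stftL2 h g z.re z.im‖ₑ * ENNReal.ofReal ((1 + ‖z‖) ^ s) :=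
    ((measurable_uncurry_stftL2 hhm hg.1).comp (measurable_re.prodMk measurable_im)).enorm.mul
      (by fun_prop)
  have hc : AEMeasurable (fun η : ℝ => ‖F η‖ₑ * ENNReal.ofReal ((1 + |η|) ^ s)) volume :=
    hF.1.enorm.mul (by fun_prop)
  calc _ ≤ _ := lintegral_mono fun z => enorm_stftL2_fourierInv_mul_mul_weight_le hs hF hh hg z
    _ = _ := lintegral_lintegral_mul_comp_sub hc hG (measurable_ofReal.const_mul I)

end STFT

theorem fourier_algebra_module_general
    (s : ℝ) (hs : 0 ≤ s)
    (f fhat : ℝ → ℂ)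
    (hfhat_int : Integrable (fun ξ : ℝ => ‖fhat ξ‖ * (1 + |ξ|) ^ s) volume)
    (hfhat_meas : AEStronglyMeasurable fhat volume)
    (hinv : ∀ t : ℝ, f t = ∫ ξ : ℝ, fhat ξ * Complex.exp ((2 * π * t * ξ) * Complex.I))
    (h₀ : ℝ → ℂ)
    (hh₀ : ∀ t : ℝ, h₀ t = (((2 : ℝ) ^ ((1 : ℝ)/4) * Real.exp (-(π * t ^ 2)) : ℝ) : ℂ))
    (g : ℝ → ℂ) (hg : MemLp g 2 volume)
    (hgM1 : m1WeightedNorm h₀ g s < ⊤) :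
    m1WeightedNorm h₀ (fun t => f t * g t) s < ⊤ ∧
      m1WeightedNorm h₀ (fun t => f t * g t) s ≤
        (∫⁻ ξ : ℝ, (‖fhat ξ‖₊ : ℝ≥0∞) * ENNReal.ofReal ((1 + |ξ|) ^ s)) *
          m1WeightedNorm h₀ g s := by
  obtain rfl : h₀ = _ := funext hh₀
  have hfhat : Integrable fhat volume :=
    hfhat_int.mono' hfhat_meas (ae_of_all _ fun ξ => le_mul_of_one_le_right (norm_nonneg _)
      (Real.one_le_rpow (by simp) hs))
  have hA : ∫⁻ ξ : ℝ, (‖fhat ξ‖₊ : ℝ≥0∞) * ENNReal.ofReal ((1 + |ξ|) ^ s) < ⊤ := by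
    have hlt := hfhat_int.lintegral_lt_top
    simp only [ENNReal.ofReal_mul (norm_nonneg _), ofReal_norm] at hlt
    exact hlt
  have hfg : (fun t : ℝ => f t * g t)
      = fun t : ℝ => (∫ ξ : ℝ, fhat ξ * cexp ((2 * π * t * ξ) * I)) * g t :=
    funext fun t => by rw [hinv t]
  have hbound := m1WeightedNorm_fourierInv_mul_le hs hfhat (by fun_prop)
    (memLp_two_ofReal_mul_exp_neg_mul_sq Real.pi_pos ((2 : ℝ) ^ ((1 : ℝ) / 4))) hg
  rw [← hfg] at hbound
  exact ⟨hbound.trans_lt (ENNReal.mul_lt_top hA hgM1), hbound⟩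

/-- If `f ∈ A_{ϑ_s}(ℝ)` (a `C₀` function which is the inverse Fourier
transform of a function `fhat` with `∫ |fhat(ξ)| (1+|ξ|)^s dξ < ∞`) and `g ∈ M¹_{ϑ_s}(ℝ)`,
then the pointwise product `f·g` lies in `M¹_{ϑ_s}(ℝ)` with
`‖fg‖_{M¹_{ϑ_s}} ≤ ‖f‖_{A_{ϑ_s}} ‖g‖_{M¹_{ϑ_s}}`. -/
theorem fourier_algebra_module
    (s : ℝ) (hs : 0 ≤ s)
    (f fhat : ℝ → ℂ) (hf_cont : Continuous f)
    (hf_c0 : Filter.Tendsto f (Filter.cocompact ℝ) (nhds 0))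
    (hfhat_int : Integrable (fun ξ : ℝ => ‖fhat ξ‖ * (1 + |ξ|) ^ s) volume)
    (hfhat_meas : AEStronglyMeasurable fhat volume)
    (hinv : ∀ t : ℝ, f t = ∫ ξ : ℝ, fhat ξ * Complex.exp ((2 * π * t * ξ) * Complex.I))
    (h₀ : ℝ → ℂ)
    (hh₀ : ∀ t : ℝ, h₀ t = (((2 : ℝ) ^ ((1 : ℝ)/4) * Real.exp (-(π * t ^ 2)) : ℝ) : ℂ))
    (g : ℝ → ℂ) (hg : MemLp g 2 volume)
    (hgM1 : m1WeightedNorm h₀ g s < ⊤) :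
    m1WeightedNorm h₀ (fun t => f t * g t) s < ⊤ ∧
      m1WeightedNorm h₀ (fun t => f t * g t) s ≤
        (∫⁻ ξ : ℝ, (‖fhat ξ‖₊ : ℝ≥0∞) * ENNReal.ofReal ((1 + |ξ|) ^ s)) *
          m1WeightedNorm h₀ g s :=
  fourier_algebra_module_general s hs f fhat hfhat_int hfhat_meas hinv h₀ hh₀ g hg hgM1
end
end
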